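/- Mathias' block-triangular identity: for square matrices X, E of the same size, the matrix exponential of the block matrix [[X, E],[0, X]] equals [[exp(X), L],[0, exp(X)]] where L = ∫₀¹ exp((1−s)X) E exp(sX) ds is the Fréchet derivative of exp at X in direction E; in particular the two diagonal blocks of the exponential are both exp(X). -/

import Mathlib

/-!
Every power of `[[X, E], [0, X]]` is block upper triangular with diagonal blocks `X ^ k`, so the
exponential series puts `exp X` on the diagonal. For the corner block, put
`A = [[X, E], [0, X]]` and `B = [[X, 0], [0, X]]`: differentiating `s ↦ exp((1-s)B) exp(sA)` gives
Duhamel's formula `exp A - exp B = ∫₀¹ exp((1-s)B) (A - B) exp(sA) ds`, whose integrand is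
`[[0, exp((1-s)X) E exp(sX)], [0, 0]]`.
-/

open Matrix NormedSpace

attribute [local instance] Matrix.linftyOpNormedRing Matrix.linftyOpNormedAlgebra

section Duhamel

variable {𝔸 : Type*} [NormedRing 𝔸] [NormedAlgebra ℝ 𝔸] [CompleteSpace 𝔸]

theorem continuous_exp_smul (a : 𝔸) : Continuous fun t : ℝ => exp (t • a) :=
  continuous_iff_continuousAt.2 fun t => (hasDerivAt_exp_smul_const a t).continuousAt

theorem continuous_exp_one_sub_smul_mul_mul_exp_smul (a b c : 𝔸) :
    Continuous fun s : ℝ => exp ((1 - s) • b) * c * exp (s • a) :=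
  (((continuous_exp_smul b).comp (continuous_sub_left 1)).mul continuous_const).mul
    (continuous_exp_smul a)

theorem exp_sub_exp_eq_integral (a b : 𝔸) :
    exp a - exp b = ∫ s in (0 : ℝ)..1, exp ((1 - s) • b) * (a - b) * exp (s • a) := by
  have hderiv : ∀ s : ℝ, HasDerivAt (fun t : ℝ => exp ((1 - t) • b) * exp (t • a))
      (exp ((1 - s) • b) * (a - b) * exp (s • a)) s := by
    intro s
    have hb : HasDerivAt (fun t : ℝ => exp ((1 - t) • b)) (-(exp ((1 - s) • b) * b)) s := by
      simpa [Function.comp_def] using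
        (hasDerivAt_exp_smul_const b (1 - s)).scomp s ((hasDerivAt_id s).const_sub 1)
    refine (hb.mul (hasDerivAt_exp_smul_const' a s)).congr_deriv ?_
    noncomm_ring
  rw [intervalIntegral.integral_eq_sub_of_hasDerivAt (fun s _ => hderiv s)
    ((continuous_exp_one_sub_smul_mul_mul_exp_smul a b (a - b)).intervalIntegrable 0 1)]
  simp

end Duhamel

namespace Matrix

variable {m n : Type*} [Fintype m] [Fintype n] [DecidableEq m] [DecidableEq n]

theorem fromBlocks_zero₂₁_pow {R : Type*} [Semiring R] (A : Matrix m m R) (B : Matrix m n R)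
    (D : Matrix n n R) (k : ℕ) :
    ∃ C, fromBlocks A B 0 D ^ k = fromBlocks (A ^ k) C 0 (D ^ k) := by
  induction k with
  | zero => exact ⟨0, fromBlocks_one.symm⟩
  | succ k ih =>
    obtain ⟨C, hC⟩ := ih
    exact ⟨A ^ k * B + C * D, by simp [pow_succ, hC, fromBlocks_multiply]⟩

variable {𝕂 : Type*} [RCLike 𝕂]

theorem hasSum_exp_apply (M : Matrix m m 𝕂) (i j : m) :
    HasSum (fun k : ℕ => (k.factorial : 𝕂)⁻¹ * (M ^ k) i j) (exp M i j) :=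
  Pi.hasSum.1 (Pi.hasSum.1 (exp_series_hasSum_exp' (𝕂 := 𝕂) M) i) j

theorem exp_fromBlocks_zero₂₁ (A : Matrix m m 𝕂) (B : Matrix m n 𝕂) (D : Matrix n n 𝕂) :
    ∃ C, exp (fromBlocks A B 0 D) = fromBlocks (exp A) C 0 (exp D) := by
  refine ⟨(exp (fromBlocks A B 0 D)).toBlocks₁₂, ?_⟩
  choose C hC using fromBlocks_zero₂₁_pow A B D
  ext (i | i) (j | j)
  · exact (hasSum_exp_apply _ _ _).unique (by simpa [hC] using hasSum_exp_apply A i j)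
  · rfl
  · exact (hasSum_exp_apply _ _ _).unique (by simp [hC])
  · exact (hasSum_exp_apply _ _ _).unique (by simpa [hC] using hasSum_exp_apply D i j)

theorem exp_fromBlocks_diagonal (A : Matrix m m 𝕂) (D : Matrix n n 𝕂) :
    exp (fromBlocks A 0 0 D) = fromBlocks (exp A) 0 0 (exp D) := by
  ext (i | i) (j | j) <;> refine (hasSum_exp_apply _ _ _).unique ?_
  · simpa [fromBlocks_diagonal_pow] using hasSum_exp_apply A i j
  · simp [fromBlocks_diagonal_pow]
  · simp [fromBlocks_diagonal_pow]
  · simpa [fromBlocks_diagonal_pow] using hasSum_exp_apply D i j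

end Matrix

/-- Mathias' block-triangular identity: exp [[X,E],[0,X]] = [[exp X, L],[0, exp X]],
where L = ∫₀¹ exp((1−s)X) E exp(sX) ds is the Fréchet derivative of exp at X in
direction E (in particular both diagonal blocks equal exp X). -/
theorem stmt_15 (n : ℕ) (X E : Matrix (Fin n) (Fin n) ℝ) :
    exp (Matrix.fromBlocks X E 0 X) =
      Matrix.fromBlocks (exp X)
        (Matrix.of fun i j =>
          ∫ s in (0:ℝ)..1, (exp ((1 - s) • X) * E * exp (s • X)) i j)
        0 (exp X) := by
  obtain ⟨C, hA⟩ := exp_fromBlocks_zero₂₁ X E X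
  rw [hA]
  congr 1
  ext i j
  set A := fromBlocks X E 0 X
  set B := fromBlocks X 0 0 X
  have hintegrand : ∀ s : ℝ, exp ((1 - s) • B) * (A - B) * exp (s • A) =
      fromBlocks 0 (exp ((1 - s) • X) * E * exp (s • X)) 0 0 := by
    intro s
    obtain ⟨C', hsA⟩ := exp_fromBlocks_zero₂₁ (s • X) (s • E) (s • X)
    simp [A, B, fromBlocks_smul, exp_fromBlocks_diagonal, hsA, fromBlocks_multiply,
      sub_eq_add_neg, fromBlocks_neg, fromBlocks_add, mul_assoc]
  let entry := (entryLinearMap ℝ ℝ (Sum.inl i : Fin n ⊕ Fin n) (Sum.inr j : Fin n ⊕ Fin n))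
    |>.toContinuousLinearMap
  -- Composed by `trans` rather than `rw`: the two matrix integrals carry different (defeq) instances.
  have hcorner : ∫ s in (0 : ℝ)..1, entry (exp ((1 - s) • B) * (A - B) * exp (s • A)) =
      entry (exp A - exp B) :=
    (entry.intervalIntegral_comp_comm
      ((continuous_exp_one_sub_smul_mul_mul_exp_smul A B (A - B)).intervalIntegrable 0 1)).trans
      (congrArg entry (exp_sub_exp_eq_integral A B)).symm
  rw [hA, exp_fromBlocks_diagonal] at hcorner
  simpa [entry, hintegrand] using hcorner.symm
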